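/- Let n ≥ 2, 0 < α, β < 2, 1 ≤ p < ∞, and let u ∈ C^{1,1}_loc ∩ L_α, v ∈ C^{1,1}_loc ∩ L_β be a positive solution pair of the system (-Δ)^{α/2}u + u = v u^{p-1}, (-Δ)^{β/2}v = u^p on ℝⁿ. Let λ₀ ∈ ℝ and suppose U_{λ₀}(x) ≥ 0 and V_{λ₀}(x) ≥ 0 for all x ∈ Σ_{λ₀}. If there exists x̃ ∈ Σ_{λ₀} with U_{λ₀}(x̃) = 0, or there exists x̃ ∈ Σ_{λ₀} with V_{λ₀}(x̃) = 0, then U_{λ₀} ≡ 0 and V_{λ₀} ≡ 0 on all of ℝⁿ; in particular u(x^{λ₀}) = u(x) and v(x^{λ₀}) = v(x) for all x ∈ ℝⁿ. -/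

import Mathlib

/-!
Write `T` for the reflection `x ↦ x^λ` and `W = w ∘ T - w`. The reflection commutes with the
fractional Laplacian, so at a point `x̃ ∈ Σ_λ` with `W x̃ = 0` the equation gives
`(-Δ)^{σ/2} W (x̃) = (-Δ)^{σ/2} w (x̃^λ) - (-Δ)^{σ/2} w (x̃) ≥ 0`: for `u` because `V ≥ 0`,
for `v` because `U ≥ 0`. On the other hand `W` is antisymmetric under `T`, so folding the
principal value integral onto `Σ_λ` gives
`(-Δ)^{σ/2} W (x̃) = -C ∫_{Σ_λ} W(y) (|x̃ - y|^{-n-σ} - |x̃^λ - y|^{-n-σ}) dy`,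
with a kernel that is positive on `Σ_λ`. As `W ≥ 0` there, `W ≡ 0`. Once `u` (resp. `v`) is
symmetric, the two values of its fractional Laplacian agree, and the equations turn this into
`V x̃ = 0` (resp. `U x̃ = 0`, as `t ↦ t ^ p` is injective), so the argument applies to the other
function as well.
-/

open MeasureTheory Filter Metric Set Bornology

noncomputable section

/-- The space `ℝⁿ`. -/
abbrev En (n : ℕ) := EuclideanSpace ℝ (Fin n)

/-- Membership in the weighted space `L_σ`. -/
def MemL (n : ℕ) (σ : ℝ) (w : En n → ℝ) : Prop :=
  LocallyIntegrable w volume ∧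
    Integrable (fun x : En n => |w x| / (1 + ‖x‖ ^ ((n : ℝ) + σ))) volume

/-- `C^{1,1}_loc` on an open set `Ω`: near every point of `Ω`, `w` is
differentiable with Lipschitz-continuous derivative. -/
def C11locOn (n : ℕ) (Ω : Set (En n)) (w : En n → ℝ) : Prop :=
  ∀ x ∈ Ω, ∃ ε > 0, ∃ K : NNReal, ball x ε ⊆ Ω ∧
    (∀ y ∈ ball x ε, DifferentiableAt ℝ w y) ∧
    LipschitzOnWith K (fderiv ℝ w) (ball x ε)

/-- `C^{1,1}_loc` on all of `ℝⁿ`. -/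
def C11loc (n : ℕ) (w : En n → ℝ) : Prop := C11locOn n univ w

/-- `HasFracLap n σ c w x L` : the fractional Laplacian `(-Δ)^{σ/2} w`, with
normalization constant `c = C_{n,σ} > 0`, exists at `x` as a principal value
and is equal to `L`. -/
def HasFracLap (n : ℕ) (σ c : ℝ) (w : En n → ℝ) (x : En n) (L : ℝ) : Prop :=
  Tendsto
    (fun ε : ℝ => c * ∫ y in {y : En n | ε ≤ dist x y},
        (w x - w y) / dist x y ^ ((n : ℝ) + σ))
    (nhdsWithin 0 (Ioi 0)) (nhds L)

/-- Reflection `x ↦ x^λ` about the hyperplane `T_λ = {x : x₁ = λ}`. -/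
def reflPt (n : ℕ) [NeZero n] (l : ℝ) (x : En n) : En n :=
  WithLp.toLp 2 fun i => if i = 0 then 2 * l - x 0 else x i

/-- The half space `Σ_λ = {x : x₁ < λ}`. -/
def halfSpace (n : ℕ) [NeZero n] (l : ℝ) : Set (En n) := {x | x 0 < l}

open Topology

section Reflection

variable {n : ℕ} [NeZero n] {l : ℝ}

lemma reflPt_apply_zero (x : En n) : reflPt n l x 0 = 2 * l - x 0 := by simp [reflPt]

lemma reflPt_apply_of_ne (x : En n) {i : Fin n} (h : i ≠ 0) : reflPt n l x i = x i := by
  simp [reflPt, h]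

lemma reflPt_reflPt (x : En n) : reflPt n l (reflPt n l x) = x := by
  ext i
  rcases eq_or_ne i 0 with rfl | h
  · simp only [reflPt_apply_zero]; ring
  · simp only [reflPt_apply_of_ne _ h]

lemma reflPt_eq_self (x : En n) (hx : x 0 = l) : reflPt n l x = x := by
  ext i
  rcases eq_or_ne i 0 with rfl | h
  · rw [reflPt_apply_zero, hx]; ring
  · rw [reflPt_apply_of_ne _ h]

lemma dist_reflPt (x y : En n) : dist (reflPt n l x) (reflPt n l y) = dist x y := by
  simp only [EuclideanSpace.dist_eq]
  congr 1
  refine Finset.sum_congr rfl fun i _ => ?_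
  rcases eq_or_ne i 0 with rfl | h
  · rw [reflPt_apply_zero, reflPt_apply_zero, Real.dist_eq, Real.dist_eq, sq_abs, sq_abs]
    ring
  · rw [reflPt_apply_of_ne _ h, reflPt_apply_of_ne _ h]

lemma dist_reflPt_left (x y : En n) : dist (reflPt n l x) y = dist x (reflPt n l y) := by
  rw [← dist_reflPt (l := l), reflPt_reflPt]

lemma isometry_reflPt : Isometry (reflPt n l) := Isometry.of_dist_eq dist_reflPt

def negFirst (n : ℕ) [NeZero n] : En n ≃ₗᵢ[ℝ] En n :=
  LinearIsometryEquiv.piLpCongrRight 2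
    fun i => if i = 0 then LinearIsometryEquiv.neg ℝ else LinearIsometryEquiv.refl ℝ ℝ

lemma reflPt_eq_add_negFirst (x : En n) :
    reflPt n l x = WithLp.toLp 2 (fun i => if i = 0 then 2 * l else 0) + negFirst n x := by
  ext i
  rcases eq_or_ne i 0 with rfl | h <;>
    simp [negFirst, LinearIsometryEquiv.piLpCongrRight_apply, reflPt, *, sub_eq_add_neg]

lemma measurePreserving_reflPt : MeasurePreserving (reflPt n l) volume volume := by
  rw [show reflPt n l = _ from funext reflPt_eq_add_negFirst]
  exact (measurePreserving_add_left volume _).comp (negFirst n).measurePreserving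

lemma measurableEmbedding_reflPt : MeasurableEmbedding (reflPt n l) :=
  isometry_reflPt.isClosedEmbedding.measurableEmbedding

lemma setIntegral_comp_reflPt (f : En n → ℝ) (s : Set (En n)) :
    ∫ y in reflPt n l ⁻¹' s, f (reflPt n l y) = ∫ y in s, f y :=
  measurePreserving_reflPt.setIntegral_preimage_emb measurableEmbedding_reflPt f s

lemma integrableOn_comp_reflPt_iff {f : En n → ℝ} {s : Set (En n)} :
    IntegrableOn (fun y => f (reflPt n l y)) (reflPt n l ⁻¹' s) ↔ IntegrableOn f s :=
  measurePreserving_reflPt.integrableOn_comp_preimage measurableEmbedding_reflPt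

lemma preimage_reflPt_annulus (x : En n) (ε : ℝ) :
    reflPt n l ⁻¹' {y | ε ≤ dist x y} = {y | ε ≤ dist (reflPt n l x) y} := by
  ext y; simp [dist_reflPt_left]

lemma dist_lt_dist_reflPt {x y : En n} (hx : x ∈ halfSpace n l) (hy : y ∈ halfSpace n l) :
    dist x y < dist (reflPt n l x) y := by
  change x 0 < l at hx; change y 0 < l at hy
  simp only [EuclideanSpace.dist_eq]
  refine Real.sqrt_lt_sqrt (by positivity) (Finset.sum_lt_sum (fun i _ => ?_) ⟨0, by simp, ?_⟩)
  · rcases eq_or_ne i 0 with rfl | h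
    · rw [reflPt_apply_zero, Real.dist_eq, Real.dist_eq, sq_abs, sq_abs]
      nlinarith
    · rw [reflPt_apply_of_ne _ h]
  · rw [reflPt_apply_zero, Real.dist_eq, Real.dist_eq, sq_abs, sq_abs]
    nlinarith

lemma sub_le_dist_reflPt {x y : En n} (hy : y 0 ≤ l) : l - x 0 ≤ dist (reflPt n l x) y := by
  calc l - x 0 ≤ |reflPt n l x 0 - y 0| := by
        rw [reflPt_apply_zero]; exact le_abs.2 (.inl (by linarith))
    _ ≤ dist (reflPt n l x) y := by rw [← Real.dist_eq]; exact PiLp.dist_apply_le _ _ 0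

lemma isOpen_halfSpace : IsOpen (halfSpace n l) :=
  isOpen_lt ((continuous_apply 0).comp (PiLp.continuous_ofLp 2 _)) continuous_const

lemma measurableSet_halfSpace : MeasurableSet (halfSpace n l) := isOpen_halfSpace.measurableSet

lemma preimage_reflPt_upperHalfSpace : reflPt n l ⁻¹' {y | l < y 0} = halfSpace n l := by
  ext y
  change l < reflPt n l y 0 ↔ y 0 < l
  rw [reflPt_apply_zero]
  constructor <;> intro h <;> linarith

end Reflection

section FracLapIntegrable

variable {n : ℕ} {σ : ℝ}

lemma measurableSet_annulus (x : En n) (ε : ℝ) : MeasurableSet {y | ε ≤ dist x y} :=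
  measurableSet_le measurable_const (continuous_const.dist continuous_id).measurable

def FracLapIntegrable (n : ℕ) (σ : ℝ) (w : En n → ℝ) (x : En n) : Prop :=
  ∀ ε > 0,
    IntegrableOn (fun y => (w x - w y) / dist x y ^ ((n : ℝ) + σ)) {y | ε ≤ dist x y}

lemma one_add_norm_le_mul_dist {x y : En n} {ε : ℝ} (hε : 0 < ε) (hy : ε ≤ dist x y) :
    1 + ‖y‖ ≤ ((1 + ‖x‖) / ε + 1) * dist x y := by
  have hx : 1 + ‖x‖ ≤ (1 + ‖x‖) / ε * dist x y := by
    rw [div_mul_eq_mul_div, le_div_iff₀ hε]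
    exact mul_le_mul_of_nonneg_left hy (by positivity)
  have := norm_le_norm_add_norm_sub' y x
  rw [← dist_eq_norm, dist_comm] at this
  nlinarith

lemma one_div_rpow_dist_le {x y : En n} {r ε : ℝ} (hr : 0 ≤ r) (hε : 0 < ε)
    (hy : ε ≤ dist x y) :
    1 / dist x y ^ r ≤ ((1 + ‖x‖) / ε + 1) ^ r * (1 + ‖y‖) ^ (-r) := by
  have hd : 0 < dist x y := hε.trans_le hy
  rw [Real.rpow_neg (by positivity), ← div_eq_mul_inv,
    div_le_div_iff₀ (by positivity) (by positivity), one_mul,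
    ← Real.mul_rpow (by positivity) hd.le]
  exact Real.rpow_le_rpow (by positivity) (one_add_norm_le_mul_dist hε hy) hr

lemma one_add_norm_rpow_neg_le {r : ℝ} (hr : 0 ≤ r) (y : En n) :
    (1 + ‖y‖) ^ (-r) ≤ 2 / (1 + ‖y‖ ^ r) := by
  have h1 : 1 ≤ (1 + ‖y‖) ^ r := Real.one_le_rpow (by linarith [norm_nonneg y]) hr
  have h2 : ‖y‖ ^ r ≤ (1 + ‖y‖) ^ r := Real.rpow_le_rpow (norm_nonneg y) (by linarith) hr
  rw [Real.rpow_neg (by positivity), inv_eq_one_div,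
    div_le_div_iff₀ (by positivity) (by positivity)]
  linarith

lemma MemL.fracLapIntegrable {w : En n → ℝ} (hσ : 0 < σ) (hw : MemL n σ w) (x : En n) :
    FracLapIntegrable n σ w x := by
  intro ε hε
  set r : ℝ := (n : ℝ) + σ
  set C : ℝ := ((1 + ‖x‖) / ε + 1) ^ r
  have hr : 0 ≤ r := by positivity
  have hweight : Integrable (fun y : En n => (1 + ‖y‖) ^ (-r)) :=
    integrable_one_add_norm (by rw [finrank_euclideanSpace_fin]; linarith)
  have hmeas : AEStronglyMeasurable (fun y : En n => 1 / dist x y ^ r) :=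
    (measurable_const.div ((continuous_const.dist continuous_id).rpow_const
      fun _ => .inr hr).measurable).aestronglyMeasurable
  have hkernel : IntegrableOn (fun y => 1 / dist x y ^ r) {y | ε ≤ dist x y} := by
    refine (hweight.const_mul C).integrableOn.mono' hmeas.restrict ?_
    refine (ae_restrict_iff' (measurableSet_annulus x ε)).2 (ae_of_all _ fun y hy => ?_)
    rw [Real.norm_eq_abs, abs_of_nonneg (by positivity)]
    exact one_div_rpow_dist_le hr hε hy
  have hwk : IntegrableOn (fun y => w y * (1 / dist x y ^ r)) {y | ε ≤ dist x y} := by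
    refine (hw.2.const_mul (2 * C)).integrableOn.mono'
      (hw.1.aestronglyMeasurable.mul hmeas).restrict ?_
    refine (ae_restrict_iff' (measurableSet_annulus x ε)).2 (ae_of_all _ fun y hy => ?_)
    calc ‖w y * (1 / dist x y ^ r)‖ = |w y| * (1 / dist x y ^ r) := by
          rw [Real.norm_eq_abs, abs_mul, abs_of_nonneg (a := 1 / dist x y ^ r) (by positivity)]
      _ ≤ |w y| * (C * (2 / (1 + ‖y‖ ^ r))) := by
          gcongr
          exact (one_div_rpow_dist_le hr hε hy).trans
            (mul_le_mul_of_nonneg_left (one_add_norm_rpow_neg_le hr y) (by positivity))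
      _ = 2 * C * (|w y| / (1 + ‖y‖ ^ r)) := by ring
  exact IntegrableOn.congr_fun ((hkernel.const_mul (w x)).sub hwk)
    (fun y _ => by simp only [Pi.sub_apply]; ring) (measurableSet_annulus x ε)

end FracLapIntegrable

section FracLap

variable {n : ℕ} {σ c : ℝ} {w w' : En n → ℝ} {x : En n} {L L' : ℝ}

lemma HasFracLap.unique (h : HasFracLap n σ c w x L) (h' : HasFracLap n σ c w x L') : L = L' :=
  tendsto_nhds_unique h h'

lemma FracLapIntegrable.sub (hi : FracLapIntegrable n σ w x) (hi' : FracLapIntegrable n σ w' x) :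
    FracLapIntegrable n σ (w - w') x := fun ε hε =>
  IntegrableOn.congr_fun ((hi ε hε).sub (hi' ε hε))
    (fun y _ => by simp only [Pi.sub_apply]; ring) (measurableSet_annulus x ε)

lemma HasFracLap.sub (h : HasFracLap n σ c w x L) (h' : HasFracLap n σ c w' x L')
    (hi : FracLapIntegrable n σ w x) (hi' : FracLapIntegrable n σ w' x) :
    HasFracLap n σ c (w - w') x (L - L') := by
  refine (Tendsto.sub h h').congr' ?_
  filter_upwards [self_mem_nhdsWithin] with ε (hε : 0 < ε)
  rw [← mul_sub, ← integral_sub (hi ε hε) (hi' ε hε)]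
  congr 1
  refine integral_congr_ae (ae_of_all _ fun y => ?_)
  simp only [Pi.sub_apply]
  ring

variable [NeZero n] {l : ℝ}

lemma hasFracLap_comp_reflPt_iff :
    HasFracLap n σ c (w ∘ reflPt n l) x L ↔ HasFracLap n σ c w (reflPt n l x) L := by
  have hint (ε : ℝ) :
      ∫ y in {y | ε ≤ dist x y},
          ((w ∘ reflPt n l) x - (w ∘ reflPt n l) y) / dist x y ^ ((n : ℝ) + σ)
        = ∫ y in {y | ε ≤ dist (reflPt n l x) y},
            (w (reflPt n l x) - w y) / dist (reflPt n l x) y ^ ((n : ℝ) + σ) := by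
    rw [← setIntegral_comp_reflPt (l := l) _ {y | ε ≤ dist (reflPt n l x) y},
      preimage_reflPt_annulus, reflPt_reflPt]
    simp only [Function.comp_apply, dist_reflPt]
  simp only [HasFracLap, hint]

lemma FracLapIntegrable.comp_reflPt (h : FracLapIntegrable n σ w (reflPt n l x)) :
    FracLapIntegrable n σ (w ∘ reflPt n l) x := fun ε hε => by
  have := (integrableOn_comp_reflPt_iff (l := l)).2 (h ε hε)
  rw [preimage_reflPt_annulus, reflPt_reflPt] at this
  simpa only [Function.comp_apply, dist_reflPt] using this

end FracLap

lemma eqOn_zero_of_setIntegral_eq_zero {X : Type*} [TopologicalSpace X] [MeasurableSpace X]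
    {μ : Measure X} [μ.IsOpenPosMeasure] {f : X → ℝ} {s U : Set X} (hs : MeasurableSet s)
    (hU : IsOpen U) (hUs : U ⊆ s) (hf : ContinuousOn f U) (hf_nonneg : ∀ y ∈ s, 0 ≤ f y)
    (hf_int : IntegrableOn f s μ) (h : ∫ y in s, f y ∂μ = 0) : EqOn f 0 U := by
  have hae := (setIntegral_eq_zero_iff_of_nonneg_ae
    ((ae_restrict_iff' hs).2 (ae_of_all _ hf_nonneg)) hf_int).1 h
  exact Measure.eqOn_open_of_ae_eq (ae_restrict_of_ae_restrict_of_subset hUs hae) hU hf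
    continuousOn_const

lemma continuousOn_div_rpow_dist {X : Type*} [MetricSpace X] {W : X → ℝ} (hW : Continuous W)
    {r : ℝ} (hr : 0 ≤ r) (z : X) : ContinuousOn (fun y => W y / dist z y ^ r) {z}ᶜ :=
  hW.continuousOn.div
    ((continuous_const.dist continuous_id).rpow_const fun _ => .inr hr).continuousOn
    fun _ hy => (Real.rpow_pos_of_pos (dist_pos.2 (Ne.symm hy)) r).ne'

section Antisymmetric

variable {n : ℕ} [NeZero n] {l σ : ℝ} {W : En n → ℝ} {x : En n}

lemma tendsto_volume_ball_zero (x : En n) :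
    Tendsto (fun ε => volume (ball x ε)) (𝓝[>] 0) (𝓝 0) := by
  have h := tendsto_measure_biInter_gt (μ := volume) (s := ball x) (a := (0 : ℝ))
    (fun r _ => measurableSet_ball.nullMeasurableSet) (fun _ _ _ hij => ball_subset_ball hij)
    ⟨1, one_pos, measure_ball_lt_top.ne⟩
  rwa [biInter_gt_ball, closedBall_zero, measure_singleton] at h

lemma tendsto_setIntegral_diff_annulus {f : En n → ℝ} {s : Set (En n)} (hf : IntegrableOn f s)
    (x : En n) :
    Tendsto (fun ε => ∫ y in s \ {y | ε ≤ dist x y}, f y) (𝓝[>] 0) (𝓝 0) := by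
  have hball (ε : ℝ) : s \ {y | ε ≤ dist x y} = ball x ε ∩ s := by
    ext y; simp [dist_comm, and_comm]
  simp_rw [hball, ← Measure.restrict_restrict measurableSet_ball]
  refine hf.tendsto_setIntegral_nhds_zero (tendsto_of_tendsto_of_tendsto_of_le_of_le
    tendsto_const_nhds (tendsto_volume_ball_zero x) (fun _ => zero_le) fun ε => ?_)
  exact Measure.restrict_apply_le _ _

lemma eq_zero_of_antisymm (hanti : ∀ y, W (reflPt n l y) = -W y) {y : En n} (hy : y 0 = l) :
    W y = 0 := by
  have := hanti y
  rw [reflPt_eq_self y hy] at this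
  linarith

lemma integrableOn_halfSpace_of_antisymm (hanti : ∀ y, W (reflPt n l y) = -W y)
    (hx : x ∈ halfSpace n l)
    (hi : ∀ ε > 0, IntegrableOn (fun y => W y / dist x y ^ ((n : ℝ) + σ)) {y | ε ≤ dist x y}) :
    IntegrableOn (fun y => W y / dist (reflPt n l x) y ^ ((n : ℝ) + σ)) (halfSpace n l) := by
  have hδ : 0 < l - x 0 := sub_pos.2 hx
  have h := (integrableOn_comp_reflPt_iff (l := l)).2 (hi _ hδ)
  rw [preimage_reflPt_annulus] at h
  refine (h.mono_set fun y hy => sub_le_dist_reflPt (le_of_lt hy)).neg.congr_fun (fun y _ => ?_)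
    measurableSet_halfSpace
  simp only [Pi.neg_apply, hanti, dist_reflPt_left]
  ring

def foldedIntegrand (n : ℕ) [NeZero n] (σ l : ℝ) (W : En n → ℝ) (x y : En n) : ℝ :=
  W y / dist x y ^ ((n : ℝ) + σ) - W y / dist (reflPt n l x) y ^ ((n : ℝ) + σ)

lemma setIntegral_annulus_eq_of_antisymm (hanti : ∀ y, W (reflPt n l y) = -W y)
    (hx : x ∈ halfSpace n l)
    (hi : ∀ ε > 0, IntegrableOn (fun y => W y / dist x y ^ ((n : ℝ) + σ)) {y | ε ≤ dist x y})
    {ε : ℝ} (hε : 0 < ε) (hεx : ε ≤ l - x 0) :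
    ∫ y in {y | ε ≤ dist x y}, W y / dist x y ^ ((n : ℝ) + σ)
      = (∫ y in {y | ε ≤ dist x y} ∩ halfSpace n l, foldedIntegrand n σ l W x y)
        - ∫ y in halfSpace n l \ {y | ε ≤ dist x y},
            W y / dist (reflPt n l x) y ^ ((n : ℝ) + σ) := by
  set A := {y | ε ≤ dist x y}
  set K₁ := fun y => W y / dist x y ^ ((n : ℝ) + σ)
  set K₂ := fun y => W y / dist (reflPt n l x) y ^ ((n : ℝ) + σ)
  have hK₂ := integrableOn_halfSpace_of_antisymm hanti hx hi
  have hupper : ∫ y in A \ halfSpace n l, K₁ y = -∫ y in halfSpace n l, K₂ y := by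
    have hpre : reflPt n l ⁻¹' (A ∩ {y | l < y 0}) = halfSpace n l := by
      rw [preimage_inter, preimage_reflPt_annulus, preimage_reflPt_upperHalfSpace]
      exact inter_eq_right.2 fun y hy => hεx.trans (sub_le_dist_reflPt (le_of_lt hy))
    have hplane : ∫ y in A \ halfSpace n l, K₁ y = ∫ y in A ∩ {y | l < y 0}, K₁ y := by
      refine setIntegral_eq_of_subset_of_forall_sdiff_eq_zero
        ((measurableSet_annulus x ε).diff measurableSet_halfSpace)
        (fun y ⟨hyA, (hy0 : l < y 0)⟩ => ⟨hyA, (lt_asymm hy0 : ¬ y 0 < l)⟩) fun y hy => ?_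
      have hy0 : y 0 = l := le_antisymm (not_lt.1 fun h => hy.2 ⟨hy.1.1, h⟩) (not_lt.1 hy.1.2)
      simp only [K₁, eq_zero_of_antisymm hanti hy0, zero_div]
    rw [hplane, ← setIntegral_comp_reflPt, hpre, ← integral_neg]
    refine integral_congr_ae (ae_of_all _ fun y => ?_)
    simp only [K₁, K₂, hanti, dist_reflPt_left, neg_div]
  have hA := integral_inter_add_sdiff (measurableSet_halfSpace (l := l)) (hi ε hε)
  have hhalf := integral_inter_add_sdiff (measurableSet_annulus x ε) hK₂
  rw [inter_comm] at hhalf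
  simp only [foldedIntegrand]
  rw [integral_sub ((hi ε hε).mono_set inter_subset_left) (hK₂.mono_set inter_subset_right)]
  linarith

lemma rpow_dist_lt_rpow_dist_reflPt {r : ℝ} (hr : 0 < r) {y : En n} (hx : x ∈ halfSpace n l)
    (hy : y ∈ halfSpace n l) : dist x y ^ r < dist (reflPt n l x) y ^ r :=
  Real.rpow_lt_rpow dist_nonneg (dist_lt_dist_reflPt hx hy) hr

lemma foldedIntegrand_nonneg (hσ : 0 < (n : ℝ) + σ) {y : En n} (hx : x ∈ halfSpace n l)
    (hy : y ∈ halfSpace n l) (hxy : y ≠ x) (hWy : 0 ≤ W y) : 0 ≤ foldedIntegrand n σ l W x y :=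
  sub_nonneg.2 <| div_le_div_of_nonneg_left hWy (Real.rpow_pos_of_pos (dist_pos.2 hxy.symm) _)
    (rpow_dist_lt_rpow_dist_reflPt hσ hx hy).le

lemma foldedIntegrand_pos (hσ : 0 < (n : ℝ) + σ) {y : En n} (hx : x ∈ halfSpace n l)
    (hy : y ∈ halfSpace n l) (hxy : y ≠ x) (hWy : 0 < W y) : 0 < foldedIntegrand n σ l W x y :=
  sub_pos.2 <| div_lt_div_of_pos_left hWy (Real.rpow_pos_of_pos (dist_pos.2 hxy.symm) _)
    (rpow_dist_lt_rpow_dist_reflPt hσ hx hy)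

lemma continuousOn_foldedIntegrand (hσ : 0 < (n : ℝ) + σ) (hWc : Continuous W)
    (hx : x ∈ halfSpace n l) : ContinuousOn (foldedIntegrand n σ l W x) (halfSpace n l \ {x}) :=
  ((continuousOn_div_rpow_dist hWc hσ.le x).mono fun _ hy => hy.2).sub
    ((continuousOn_div_rpow_dist hWc hσ.le _).mono fun _ hy =>
      (dist_pos.1 (dist_nonneg.trans_lt (dist_lt_dist_reflPt hx hy.1))).symm)

-- For `ε ≤ ε₀` the folded integral over `{ε₀ ≤ |x - y|}` is at most the one over
-- `{ε ≤ |x - y|}`, which is the truncated integral plus the part over `B_ε(x) ∩ Σ_λ`, and the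
-- latter tends to zero.
lemma setIntegral_foldedIntegrand_le (hσ : 0 < (n : ℝ) + σ)
    (hanti : ∀ y, W (reflPt n l y) = -W y)
    (hnonneg : ∀ y ∈ halfSpace n l, 0 ≤ W y) (hx : x ∈ halfSpace n l)
    (hi : ∀ ε > 0, IntegrableOn (fun y => W y / dist x y ^ ((n : ℝ) + σ)) {y | ε ≤ dist x y})
    {M : ℝ} (hM : Tendsto (fun ε => ∫ y in {y | ε ≤ dist x y}, W y / dist x y ^ ((n : ℝ) + σ))
      (𝓝[>] 0) (𝓝 M)) {ε₀ : ℝ} (hε₀ : 0 < ε₀) :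
    ∫ y in {y | ε₀ ≤ dist x y} ∩ halfSpace n l, foldedIntegrand n σ l W x y ≤ M := by
  have hK₂ := integrableOn_halfSpace_of_antisymm hanti hx hi
  have hlim := hM.add (tendsto_setIntegral_diff_annulus hK₂ x)
  rw [add_zero] at hlim
  refine ge_of_tendsto hlim ?_
  filter_upwards [Ioc_mem_nhdsGT (lt_min hε₀ (sub_pos.2 hx))] with ε ⟨hε, hεle⟩
  rw [setIntegral_annulus_eq_of_antisymm hanti hx hi hε (hεle.trans (min_le_right _ _)),
    sub_add_cancel]
  refine setIntegral_mono_set (((hi ε hε).mono_set inter_subset_left).sub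
    (hK₂.mono_set inter_subset_right)) ((ae_restrict_iff' ((measurableSet_annulus x ε).inter
      measurableSet_halfSpace)).2 (ae_of_all _ fun y ⟨hyA, hy⟩ => ?_))
    (Eventually.of_forall fun y hy => ⟨(hεle.trans (min_le_left _ _)).trans hy.1, hy.2⟩)
  exact foldedIntegrand_nonneg hσ hx hy (dist_pos.1 (hε.trans_le hyA)).symm (hnonneg y hy)

lemma eqOn_zero_halfSpace_of_setIntegral_foldedIntegrand_nonpos (hσ : 0 < (n : ℝ) + σ)
    (hWc : Continuous W) (hanti : ∀ y, W (reflPt n l y) = -W y)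
    (hnonneg : ∀ y ∈ halfSpace n l, 0 ≤ W y) (hx : x ∈ halfSpace n l) (hWx : W x = 0)
    (hi : ∀ ε > 0, IntegrableOn (fun y => W y / dist x y ^ ((n : ℝ) + σ)) {y | ε ≤ dist x y})
    (hJ : ∀ ε > 0, ∫ y in {y | ε ≤ dist x y} ∩ halfSpace n l, foldedIntegrand n σ l W x y ≤ 0)
    {y : En n} (hy : y ∈ halfSpace n l) : W y = 0 := by
  rcases eq_or_ne y x with rfl | hyx
  · exact hWx
  set ε := dist x y / 2
  have hε : 0 < ε := half_pos (dist_pos.2 hyx.symm)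
  have hs := (measurableSet_annulus x ε).inter (measurableSet_halfSpace (l := l))
  have hnonneg' : ∀ z ∈ {z | ε ≤ dist x z} ∩ halfSpace n l, 0 ≤ foldedIntegrand n σ l W x z :=
    fun z ⟨hzA, hz⟩ => foldedIntegrand_nonneg hσ hx hz (dist_pos.1 (hε.trans_le hzA)).symm
      (hnonneg z hz)
  have hint : IntegrableOn (foldedIntegrand n σ l W x) ({z | ε ≤ dist x z} ∩ halfSpace n l) :=
    ((hi ε hε).mono_set inter_subset_left).sub
      ((integrableOn_halfSpace_of_antisymm hanti hx hi).mono_set inter_subset_right)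
  have hU : {z | ε < dist x z} ∩ halfSpace n l ⊆ halfSpace n l \ {x} :=
    fun z ⟨(hzA : ε < dist x z), hz⟩ => ⟨hz, (dist_pos.1 (hε.trans hzA)).symm⟩
  have hgy := eqOn_zero_of_setIntegral_eq_zero hs
    ((isOpen_lt continuous_const (continuous_const.dist continuous_id)).inter isOpen_halfSpace)
    (inter_subset_inter_left _ fun z (hz : ε < dist x z) => hz.le)
    ((continuousOn_foldedIntegrand hσ hWc hx).mono hU) hnonneg' hint
    (le_antisymm (hJ ε hε) (setIntegral_nonneg hs hnonneg'))
    (show y ∈ {z | ε < dist x z} ∩ halfSpace n l from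
      ⟨half_lt_self (dist_pos.2 hyx.symm), hy⟩)
  by_contra hWy
  exact (foldedIntegrand_pos hσ hx hy hyx (lt_of_le_of_ne (hnonneg y hy) (Ne.symm hWy))).ne' hgy

theorem eq_zero_of_antisymm_of_hasFracLap_nonneg (hσ : 0 < (n : ℝ) + σ) {c L : ℝ} (hc : 0 < c)
    (hWc : Continuous W) (hanti : ∀ y, W (reflPt n l y) = -W y)
    (hnonneg : ∀ y ∈ halfSpace n l, 0 ≤ W y) (hx : x ∈ halfSpace n l) (hWx : W x = 0)
    (hi : FracLapIntegrable n σ W x) (hL : HasFracLap n σ c W x L) (hL0 : 0 ≤ L) (y : En n) :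
    W y = 0 := by
  have hi' (ε : ℝ) (hε : 0 < ε) :
      IntegrableOn (fun y => W y / dist x y ^ ((n : ℝ) + σ)) {y | ε ≤ dist x y} :=
    (hi ε hε).neg.congr_fun
      (fun y _ => by simp only [hWx, zero_sub, neg_div, Pi.neg_apply, neg_neg])
      (measurableSet_annulus x ε)
  have hI : Tendsto (fun ε => ∫ y in {y | ε ≤ dist x y}, W y / dist x y ^ ((n : ℝ) + σ))
      (𝓝[>] 0) (𝓝 (-(L / c))) := by
    refine (hL.div_const c).neg.congr fun ε => ?_
    simp only [hWx, zero_sub, neg_div, integral_neg, mul_neg, mul_div_cancel_left₀ _ hc.ne',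
      neg_neg]
  have hhalf (y : En n) (hy : y ∈ halfSpace n l) : W y = 0 :=
    eqOn_zero_halfSpace_of_setIntegral_foldedIntegrand_nonpos hσ hWc hanti hnonneg hx hWx hi'
      (fun ε hε => (setIntegral_foldedIntegrand_le hσ hanti hnonneg hx hi' hI hε).trans
        (neg_nonpos.2 (div_nonneg hL0 hc.le))) hy
  rcases lt_trichotomy (y 0) l with h | h | h
  · exact hhalf y h
  · exact eq_zero_of_antisymm hanti h
  · have := hhalf (reflPt n l y) (by change reflPt n l y 0 < l; rw [reflPt_apply_zero]; linarith)
    rw [hanti] at this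
    linarith

end Antisymmetric

lemma C11loc.continuous {n : ℕ} {w : En n → ℝ} (h : C11loc n w) : Continuous w :=
  continuous_iff_continuousAt.2 fun x => by
    obtain ⟨ε, hε, -, -, hdiff, -⟩ := h x (mem_univ x)
    exact (hdiff x (mem_ball_self hε)).continuousAt

section Symmetry

variable {n : ℕ} [NeZero n] {l σ c L L' : ℝ} {w : En n → ℝ} {x : En n}

theorem comp_reflPt_eq_and_eq_of_hasFracLap_le (hσ : 0 < σ) (hc : 0 < c) (hwc : Continuous w)
    (hw : MemL n σ w) (hx : x ∈ halfSpace n l) (hwx : w (reflPt n l x) = w x)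
    (hmono : ∀ y ∈ halfSpace n l, w y ≤ w (reflPt n l y))
    (hL : HasFracLap n σ c w x L) (hL' : HasFracLap n σ c w (reflPt n l x) L') (hle : L ≤ L') :
    w ∘ reflPt n l = w ∧ L = L' := by
  have hi := hw.fracLapIntegrable hσ
  have hL'_comp := hasFracLap_comp_reflPt_iff.2 hL'
  have hsymm : w ∘ reflPt n l = w := by
    funext y
    refine sub_eq_zero.1 (eq_zero_of_antisymm_of_hasFracLap_nonneg (by positivity) hc
      ((hwc.comp isometry_reflPt.continuous).sub hwc) (fun y => ?_)
      (fun y hy => sub_nonneg.2 (hmono y hy)) hx (sub_eq_zero.2 hwx)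
      ((hi _).comp_reflPt.sub (hi x)) (hL'_comp.sub hL (hi _).comp_reflPt (hi x))
      (sub_nonneg.2 hle) y)
    simp only [Pi.sub_apply, Function.comp_apply, reflPt_reflPt, neg_sub]
  exact ⟨hsymm, hL.unique (hsymm ▸ hL'_comp)⟩

end Symmetry

theorem statement15_general
    (n : ℕ) [NeZero n]
    (α β : ℝ) (hα : 0 < α ∧ α < 2) (hβ : 0 < β ∧ β < 2)
    (p : ℝ) (hp : 1 ≤ p)
    (cα cβ : ℝ) (hcα : 0 < cα) (hcβ : 0 < cβ)
    (u v : En n → ℝ)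
    (hu_reg : C11loc n u) (hu_L : MemL n α u)
    (hv_reg : C11loc n v) (hv_L : MemL n β v)
    (hu_pos : ∀ x, 0 < u x)
    (heq_u : ∀ x, HasFracLap n α cα u x (v x * u x ^ (p - 1) - u x))
    (heq_v : ∀ x, HasFracLap n β cβ v x (u x ^ p))
    (lam₀ : ℝ)
    (hnonneg : ∀ x ∈ halfSpace n lam₀,
      0 ≤ u (reflPt n lam₀ x) - u x ∧ 0 ≤ v (reflPt n lam₀ x) - v x)
    (hzero : (∃ xt ∈ halfSpace n lam₀, u (reflPt n lam₀ xt) - u xt = 0) ∨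
      (∃ xt ∈ halfSpace n lam₀, v (reflPt n lam₀ xt) - v xt = 0)) :
    ∀ x : En n, u (reflPt n lam₀ x) = u x ∧ v (reflPt n lam₀ x) = v x := by
  set T := reflPt n lam₀
  have hu_mono (y) (hy : y ∈ halfSpace n lam₀) : u y ≤ u (T y) :=
    sub_nonneg.1 (hnonneg y hy).1
  have hv_mono (y) (hy : y ∈ halfSpace n lam₀) : v y ≤ v (T y) :=
    sub_nonneg.1 (hnonneg y hy).2
  have of_u (xt) (hxt : xt ∈ halfSpace n lam₀) (hu_xt : u (T xt) = u xt) :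
      u ∘ T = u ∧ v (T xt) = v xt := by
    obtain ⟨hsymm, hL⟩ := comp_reflPt_eq_and_eq_of_hasFracLap_le hα.1 hcα hu_reg.continuous
      hu_L hxt hu_xt hu_mono (heq_u xt) (heq_u (T xt)) (by
        rw [hu_xt]; gcongr; exacts [Real.rpow_nonneg (hu_pos xt).le _, hv_mono xt hxt])
    rw [hu_xt, sub_left_inj] at hL
    exact ⟨hsymm, (mul_right_cancel₀ (Real.rpow_pos_of_pos (hu_pos xt) _).ne' hL).symm⟩
  have of_v (xt) (hxt : xt ∈ halfSpace n lam₀) (hv_xt : v (T xt) = v xt) :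
      v ∘ T = v ∧ u (T xt) = u xt := by
    obtain ⟨hsymm, hL⟩ := comp_reflPt_eq_and_eq_of_hasFracLap_le hβ.1 hcβ hv_reg.continuous
      hv_L hxt hv_xt hv_mono (heq_v xt) (heq_v (T xt))
      (Real.rpow_le_rpow (hu_pos xt).le (hu_mono xt hxt) (by linarith))
    exact ⟨hsymm, ((Real.rpow_left_inj (hu_pos _).le (hu_pos _).le (by linarith)).1 hL).symm⟩
  obtain ⟨xt, hxt, hu_xt⟩ : ∃ xt ∈ halfSpace n lam₀, u (T xt) = u xt := by
    rcases hzero with ⟨xt, hxt, h⟩ | ⟨xt, hxt, h⟩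
    · exact ⟨xt, hxt, sub_eq_zero.1 h⟩
    · exact ⟨xt, hxt, (of_v xt hxt (sub_eq_zero.1 h)).2⟩
  obtain ⟨hu, hv_xt⟩ := of_u xt hxt hu_xt
  exact fun x => ⟨congrFun hu x, congrFun (of_v xt hxt hv_xt).1 x⟩

/-- (Step 2 of the moving plane method: at the limiting
position, if `U_{λ₀}` or `V_{λ₀}` vanishes somewhere in `Σ_{λ₀}` while both
are nonnegative there, then both vanish identically, i.e. `u` and `v` are
symmetric about `T_{λ₀}`). -/
theorem statement15
    (n : ℕ) [NeZero n] (hn : 2 ≤ n)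
    (α β : ℝ) (hα : 0 < α ∧ α < 2) (hβ : 0 < β ∧ β < 2)
    (p : ℝ) (hp : 1 ≤ p)
    (cα cβ : ℝ) (hcα : 0 < cα) (hcβ : 0 < cβ)
    (u v : En n → ℝ)
    (hu_reg : C11loc n u) (hu_L : MemL n α u)
    (hv_reg : C11loc n v) (hv_L : MemL n β v)
    (hu_pos : ∀ x, 0 < u x) (hv_pos : ∀ x, 0 < v x)
    (heq_u : ∀ x, HasFracLap n α cα u x (v x * u x ^ (p - 1) - u x))
    (heq_v : ∀ x, HasFracLap n β cβ v x (u x ^ p))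
    (lam₀ : ℝ)
    (hnonneg : ∀ x ∈ halfSpace n lam₀,
      0 ≤ u (reflPt n lam₀ x) - u x ∧ 0 ≤ v (reflPt n lam₀ x) - v x)
    (hzero : (∃ xt ∈ halfSpace n lam₀, u (reflPt n lam₀ xt) - u xt = 0) ∨
      (∃ xt ∈ halfSpace n lam₀, v (reflPt n lam₀ xt) - v xt = 0)) :
    ∀ x : En n, u (reflPt n lam₀ x) = u x ∧ v (reflPt n lam₀ x) = v x :=
  statement15_general n α β hα hβ p hp cα cβ hcα hcβ u v hu_reg hu_L hv_reg hv_L hu_pos heq_u heq_v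
    lam₀ hnonneg hzero
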